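/- arXiv:2411.09355 — 5 statements merged into one kernel-verified Lean document; each statement's English description precedes it below -/
import Mathlib

section
/- Consider a single-item-type auction with capacity 10, two bidders with value functions v1(x) = 100·𝟙[x ≥ 1] and v2(x) = 9x + x²/25 for x ∈ {0,...,10}. Then for every price p ∈ [0,∞), bidder 2's utility-maximizing demand response is either 10 (if p ≤ 9.4) or 0 (if p ≥ 9.4); in particular, bidder 2 never demands 9 items at any price. Consequently, any allocation assembled from demand-query responses (bundles in {0, 10} for bidder 2) achieves social welfare at most 100, while the efficient allocation (1 item to bidder 1, 9 to bidder 2) has social welfare 184.24, so the efficiency of any demand-query-only auction is at most 100/184.24 < 0.55. -/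
noncomputable section

/-- Value function of bidder 1: 100 if at least one item, else 0. -/
def v1 (x : ℕ) : ℝ := if 1 ≤ x then 100 else 0

/-- Value function of bidder 2: 9x + x²/25. -/
def v2 (x : ℕ) : ℝ := 9 * (x : ℝ) + (x : ℝ) ^ 2 / 25

/-- bidder 2's demand response at any price p ≥ 0 is 10 (if p ≤ 9.4)
or 0 (if p ≥ 9.4), in particular never 9; any allocation assembled from demand
responses (bidder 2 receiving 0 or 10) has welfare at most 100; the efficient
allocation (1,9) has welfare 184.24; hence efficiency ≤ 100/184.24 < 0.55. -/
theorem stmt0 :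
    (∀ p : ℝ, 0 ≤ p → ∀ x : ℕ, x ≤ 10 →
      (∀ y : ℕ, y ≤ 10 → v2 y - p * y ≤ v2 x - p * x) →
      ((p < 9.4 → x = 10) ∧ (9.4 < p → x = 0) ∧ (x = 0 ∨ x = 10) ∧ x ≠ 9)) ∧
    (∀ a1 a2 : ℕ, a1 + a2 ≤ 10 → (a2 = 0 ∨ a2 = 10) → v1 a1 + v2 a2 ≤ 100) ∧
    v1 1 + v2 9 = 184.24 ∧
    (100 : ℝ) / 184.24 < 0.55 := by
  refine ⟨?_, ?_, ?_, ?_⟩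
  · intro p hp x hx h
    have h0 := h 0 (by norm_num)
    have h10 := h 10 (by norm_num)
    norm_num [v2] at h0 h10
    interval_cases x <;> norm_num [v2] at h0 h10 ⊢ <;> linarith
  · rintro a1 a2 hsum (rfl | rfl)
    · have : v1 a1 ≤ 100 := by unfold v1; split <;> norm_num
      simpa [v2] using this
    · have ha1 : a1 = 0 := by omega
      subst ha1
      norm_num [v1, v2]
  · norm_num [v1, v2]
  · norm_num
end
end

section
/- Consider the two-item auction (capacities c₁ = c₂ = 1) with bidders v₁(x) = max{400·𝟙[x₁≥1], 2·𝟙[x₂≥1]} and v₂(x) = 1.1·𝟙[x₁≥1]. Suppose the elicited reports are: bidder 1 demanded (1,0) at prices (1,1) and at (1.2,1); bidder 2 demanded (1,0) at prices (1,1) and (0,0) at (1.2,1). Then the winner-determination problem maximizing inferred social welfare assigns item 1 to bidder 1, achieving true social welfare 400 (efficiency 100%). If additionally the demand query at prices (401,1) is asked — answered by bidder 1 with (0,1) and by bidder 2 with (0,0) — then the winner-determination problem on the enlarged report set assigns item 2 to bidder 1 and item 1 to bidder 2, yielding true social welfare 3.1, i.e., efficiency 3.1/400 < 1%. -/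
noncomputable section

/-- Bundles over two distinct items, each with capacity 1. -/
abbrev Bndl := ℕ × ℕ

/-- Bidder 1's value function. -/
def w1 (x : Bndl) : ℝ := max (if 1 ≤ x.1 then 400 else 0) (if 1 ≤ x.2 then 2 else 0)

/-- Bidder 2's value function. -/
def w2 (x : Bndl) : ℝ := if 1 ≤ x.1 then 1.1 else 0

/-- The inferred value of a bundle from a list of demand reports
(pairs of response-bundle and price vector): the maximum of ⟨p, x⟩ over all
reports whose response was exactly x, and 0 otherwise. -/
def inferred (R : List (Bndl × (ℝ × ℝ))) (x : Bndl) : ℝ :=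
  ((R.filter (fun r => decide (r.1 = x))).map
      (fun r => r.2.1 * (x.1 : ℝ) + r.2.2 * (x.2 : ℝ))).foldr max 0

/-- Bidder 1's demand reports after the first two demand queries. -/
def R1 : List (Bndl × (ℝ × ℝ)) := [((1, 0), (1, 1)), ((1, 0), (1.2, 1))]

/-- Bidder 2's demand reports after the first two demand queries. -/
def R2 : List (Bndl × (ℝ × ℝ)) := [((1, 0), (1, 1)), ((0, 0), (1.2, 1))]

/-- Bidder 1's reports after additionally answering the query at prices (401,1). -/
def R1' : List (Bndl × (ℝ × ℝ)) := R1 ++ [((0, 1), (401, 1))]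

/-- Bidder 2's reports after additionally answering the query at prices (401,1). -/
def R2' : List (Bndl × (ℝ × ℝ)) := R2 ++ [((0, 0), (401, 1))]

/-- A bidder may only be assigned a reported bundle or the empty bundle. -/
def allowed (R : List (Bndl × (ℝ × ℝ))) (x : Bndl) : Prop :=
  x = (0, 0) ∨ ∃ r ∈ R, r.1 = x

/-- Feasibility: each item assigned at most once. -/
def feasible (a : Bndl × Bndl) : Prop := a.1.1 + a.2.1 ≤ 1 ∧ a.1.2 + a.2.2 ≤ 1

/-! Before the query at (401, 1) item 1 has inferred values 1.2 for bidder 1 and 1 for bidder 2,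
so it goes to bidder 1, which is efficient. The query reveals bidder 1's demand for item 2, but
only at its price 1, while item 1 keeps the low inferred value 1.2 for her (far below her value
400). Splitting the items now has inferred welfare 1 + 1 = 2 > 1.2, and wins, although its true
welfare is only 2 + 1.1 = 3.1. -/

section InferredValue

variable (R : List (Bndl × (ℝ × ℝ))) (x y : Bndl) (p : ℝ × ℝ)

@[simp]
lemma inferred_nil : inferred [] x = 0 := rfl

@[simp]
lemma inferred_cons_self :
    inferred ((x, p) :: R) x = max (p.1 * x.1 + p.2 * x.2) (inferred R x) := by
  simp [inferred]

@[simp]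
lemma inferred_cons_of_ne (h : y ≠ x) : inferred ((y, p) :: R) x = inferred R x := by
  simp [inferred, h]

end InferredValue

def IsUniqueWDPSolution (Ra Rb : List (Bndl × (ℝ × ℝ))) (a : Bndl × Bndl) : Prop :=
  (∀ b : Bndl × Bndl, feasible b → allowed Ra b.1 → allowed Rb b.2 →
    inferred Ra b.1 + inferred Rb b.2 ≤ inferred Ra a.1 + inferred Rb a.2) ∧
  feasible a ∧ allowed Ra a.1 ∧ allowed Rb a.2 ∧
  (∀ b : Bndl × Bndl, feasible b → allowed Ra b.1 → allowed Rb b.2 →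
    inferred Ra b.1 + inferred Rb b.2 = inferred Ra a.1 + inferred Rb a.2 → b = a)

lemma isUniqueWDPSolution_of_lt {Ra Rb : List (Bndl × (ℝ × ℝ))} {a : Bndl × Bndl}
    (ha : feasible a) (ha₁ : allowed Ra a.1) (ha₂ : allowed Rb a.2)
    (hlt : ∀ b : Bndl × Bndl, feasible b → allowed Ra b.1 → allowed Rb b.2 → b ≠ a →
      inferred Ra b.1 + inferred Rb b.2 < inferred Ra a.1 + inferred Rb a.2) :
    IsUniqueWDPSolution Ra Rb a := by
  refine ⟨fun b hb hb₁ hb₂ => ?_, ha, ha₁, ha₂, fun b hb hb₁ hb₂ heq => ?_⟩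
  · by_cases hba : b = a
    · rw [hba]
    · exact (hlt b hb hb₁ hb₂ hba).le
  · by_contra hba
    exact (hlt b hb hb₁ hb₂ hba).ne heq

lemma allowed_R1 {x : Bndl} : allowed R1 x ↔ x = (0, 0) ∨ x = (1, 0) := by
  simp [allowed, R1, eq_comm]

lemma allowed_R2 {x : Bndl} : allowed R2 x ↔ x = (0, 0) ∨ x = (1, 0) := by
  simp [allowed, R2, eq_comm]; tauto

lemma allowed_R1' {x : Bndl} : allowed R1' x ↔ x = (0, 0) ∨ x = (1, 0) ∨ x = (0, 1) := by
  simp [allowed, R1', R1, eq_comm]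

lemma allowed_R2' {x : Bndl} : allowed R2' x ↔ x = (0, 0) ∨ x = (1, 0) := by
  simp [allowed, R2', R2, eq_comm]; tauto

lemma isUniqueWDPSolution_R1_R2 : IsUniqueWDPSolution R1 R2 ((1, 0), (0, 0)) := by
  refine isUniqueWDPSolution_of_lt (by simp [feasible]) (allowed_R1.2 (.inr rfl))
    (allowed_R2.2 (.inl rfl)) ?_
  rintro ⟨x, y⟩ hf hx hy hne
  rcases allowed_R1.1 hx with rfl | rfl <;> rcases allowed_R2.1 hy with rfl | rfl <;>
    simp [feasible] at hf hne ⊢ <;> norm_num [R1, R2]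

lemma isUniqueWDPSolution_R1'_R2' : IsUniqueWDPSolution R1' R2' ((0, 1), (1, 0)) := by
  refine isUniqueWDPSolution_of_lt (by simp [feasible]) (allowed_R1'.2 (.inr (.inr rfl)))
    (allowed_R2'.2 (.inr rfl)) ?_
  rintro ⟨x, y⟩ hf hx hy hne
  rcases allowed_R1'.1 hx with rfl | rfl | rfl <;> rcases allowed_R2'.1 hy with rfl | rfl <;>
    simp [feasible] at hf hne ⊢ <;> norm_num [R1', R1, R2', R2]

lemma w1_le (x : Bndl) : w1 x ≤ 400 := by
  unfold w1; split_ifs <;> norm_num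

lemma w1_le_of_fst_eq_zero {x : Bndl} (hx : x.1 = 0) : w1 x ≤ 2 := by
  unfold w1; split_ifs <;> norm_num <;> omega

lemma w2_le (x : Bndl) : w2 x ≤ 1.1 := by
  unfold w2; split_ifs <;> norm_num

lemma w2_eq_zero_of_fst_eq_zero {x : Bndl} (hx : x.1 = 0) : w2 x = 0 := by
  simp [w2, hx]

lemma welfare_le_of_feasible {a : Bndl × Bndl} (ha : feasible a) : w1 a.1 + w2 a.2 ≤ 400 := by
  rcases Nat.eq_zero_or_pos a.2.1 with h₂ | h₂
  · linarith [w1_le a.1, w2_eq_zero_of_fst_eq_zero h₂]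
  · have h₁ : a.1.1 = 0 := by have := ha.1; omega
    linarith [w1_le_of_fst_eq_zero h₁, w2_le a.2]

/-- after the first two demand queries the WDP (maximizing inferred
social welfare) uniquely assigns item 1 to bidder 1, with true social welfare 400,
the optimum (efficiency 100%).  After the additional demand query at prices
(401,1), the WDP on the enlarged reports uniquely assigns item 2 to bidder 1 and
item 1 to bidder 2, with true social welfare 3.1, i.e. efficiency 3.1/400 < 1%. -/
theorem stmt3 :
    -- Phase 1: WDP assigns item 1 to bidder 1
    (∀ a : Bndl × Bndl, feasible a → allowed R1 a.1 → allowed R2 a.2 →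
      inferred R1 a.1 + inferred R2 a.2 ≤ inferred R1 (1, 0) + inferred R2 (0, 0)) ∧
    feasible ((1, 0), (0, 0)) ∧ allowed R1 (1, 0) ∧ allowed R2 (0, 0) ∧
    (∀ a : Bndl × Bndl, feasible a → allowed R1 a.1 → allowed R2 a.2 →
      inferred R1 a.1 + inferred R2 a.2 = inferred R1 (1, 0) + inferred R2 (0, 0) →
      a = ((1, 0), (0, 0))) ∧
    w1 (1, 0) + w2 (0, 0) = 400 ∧
    (∀ a : Bndl × Bndl, feasible a → w1 a.1 + w2 a.2 ≤ 400) ∧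
    -- Phase 2: after the extra demand query at prices (401, 1)
    (∀ a : Bndl × Bndl, feasible a → allowed R1' a.1 → allowed R2' a.2 →
      inferred R1' a.1 + inferred R2' a.2 ≤ inferred R1' (0, 1) + inferred R2' (1, 0)) ∧
    feasible ((0, 1), (1, 0)) ∧ allowed R1' (0, 1) ∧ allowed R2' (1, 0) ∧
    (∀ a : Bndl × Bndl, feasible a → allowed R1' a.1 → allowed R2' a.2 →
      inferred R1' a.1 + inferred R2' a.2 = inferred R1' (0, 1) + inferred R2' (1, 0) →
      a = ((0, 1), (1, 0))) ∧
    w1 (0, 1) + w2 (1, 0) = 3.1 ∧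
    (3.1 : ℝ) / 400 < 0.01 := by
  obtain ⟨opt₁, feas₁, all₁, all₂, uniq₁⟩ := isUniqueWDPSolution_R1_R2
  obtain ⟨opt₂, feas₂, all₁', all₂', uniq₂⟩ := isUniqueWDPSolution_R1'_R2'
  exact ⟨opt₁, feas₁, all₁, all₂, uniq₁, by norm_num [w1, w2],
    fun a => welfare_le_of_feasible, opt₂, feas₂, all₁', all₂', uniq₂,
    by norm_num [w1, w2], by norm_num⟩
end
end

section
/- Bridge bid lemma: In an iterative combinatorial auction where each bidder's reports consist of demand-query responses plus value-query responses, let a* be the winner-determination allocation after the final demand query (maximizing inferred social welfare over the demand reports). If the first value query asked of each bidder i is for her bundle a*ᵢ (the 'bridge bid'), answered truthfully, then for every subsequent set of additional truthfully answered value queries, the true social welfare of the winner-determination allocation is at least the true social welfare of a*. Hence the auction's final efficiency is at least its efficiency after the demand-query phase alone. -/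
open Classical

/-- bridge bid lemma: let `astar` be the winner-determination
allocation after the final demand query (maximizing inferred social welfare
`dval` over demand reports `D`).  If the first value query asked of each bidder
is her bundle `astar i` (so `astar i ∈ V i` for any subsequent set `V` of
value-queried bundles), then the winner-determination allocation `b` on the
combined reports has true social welfare at least that of `astar`. -/
theorem stmt5 {ι X : Type*} [Fintype ι]
    (emptyB : X) (F : Set (ι → X)) (v : ι → X → ℝ)
    (D V : ι → Set X) (dval : ι → X → ℝ)
    (hd_le : ∀ i x, dval i x ≤ v i x)
    (astar : ι → X) (hastarF : astar ∈ F)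
    (hastarD : ∀ i, astar i ∈ D i ∪ {emptyB})
    (hastar_max : ∀ b ∈ F, (∀ i, b i ∈ D i ∪ {emptyB}) →
      ∑ i, dval i (b i) ≤ ∑ i, dval i (astar i))
    (hbridge : ∀ i, astar i ∈ V i)
    (b : ι → X) (hbF : b ∈ F)
    (hbAllowed : ∀ i, b i ∈ D i ∪ V i ∪ {emptyB})
    (hb_max : ∀ a ∈ F, (∀ i, a i ∈ D i ∪ V i ∪ {emptyB}) →
      ∑ i, (if a i ∈ V i then v i (a i) else dval i (a i)) ≤
      ∑ i, (if b i ∈ V i then v i (b i) else dval i (b i))) :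
    ∑ i, v i (astar i) ≤ ∑ i, v i (b i) := by
  have h1 : ∑ i, v i (astar i)
      = ∑ i, (if astar i ∈ V i then v i (astar i) else dval i (astar i)) := by
    refine Finset.sum_congr rfl fun i _ => ?_
    rw [if_pos (hbridge i)]
  have h2 := hb_max astar hastarF (fun i => by
    have := hbridge i
    simp [Set.mem_union, this])
  have h3 : ∑ i, (if b i ∈ V i then v i (b i) else dval i (b i)) ≤ ∑ i, v i (b i) := by
    refine Finset.sum_le_sum fun i _ => ?_
    split
    · exact le_refl _
    · exact hd_le i (b i)
  linarith [h1, h2, h3]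
end

section
/- Clearing prices minimize W: if a price vector p* ∈ ℝᵐ≥0 is a linear clearing price vector (there is a feasible allocation where each bidder gets a utility-maximizing bundle and the seller's revenue Σⱼ cⱼ p*ⱼ is attained), then for all p ∈ ℝᵐ≥0, W(p*) ≤ W(p), where W(p) = Σⱼ cⱼ pⱼ + Σᵢ max_{x∈X}(vᵢ(x) − ⟨p,x⟩). Moreover W(p) ≥ max_{a ∈ F} Σᵢ vᵢ(aᵢ) for all p ≥ 0, with equality at clearing prices. -/
/-- Bundle space {0,…,c₁} × ⋯ × {0,…,cₘ}. -/
abbrev Bundle (m : ℕ) (c : Fin m → ℕ) := ∀ j : Fin m, Fin (c j + 1)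

/-- Euclidean inner product ⟨p, x⟩ between a price vector and a bundle. -/
noncomputable def dotP {m : ℕ} {c : Fin m → ℕ} (p : Fin m → ℝ) (x : Bundle m c) : ℝ :=
  ∑ j, p j * ((x j : ℕ) : ℝ)

/-- W(p) = Σⱼ cⱼ pⱼ + Σᵢ max_{x ∈ X} (vᵢ(x) − ⟨p, x⟩). -/
noncomputable def W {ι : Type*} [Fintype ι] {m : ℕ} {c : Fin m → ℕ}
    (v : ι → Bundle m c → ℝ) (p : Fin m → ℝ) : ℝ :=
  (∑ j, (c j : ℝ) * p j) +
    ∑ i, Finset.univ.sup' Finset.univ_nonempty (fun x : Bundle m c => v i x - dotP p x)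

/-- clearing prices minimize W over nonnegative prices; moreover
W(p) is an upper bound on the social welfare of any feasible allocation for all
p ≥ 0, and at clearing prices W equals the (maximal) social welfare of the
clearing allocation. -/
theorem stmt10 {ι : Type*} [Fintype ι] {m : ℕ} {c : Fin m → ℕ}
    (v : ι → Bundle m c → ℝ)
    (hv0 : ∀ i, v i (fun j => (0 : Fin (c j + 1))) = 0)
    (hvnn : ∀ i x, 0 ≤ v i x)
    (pstar : Fin m → ℝ) (hpstar : ∀ j, 0 ≤ pstar j)
    (a : ι → Bundle m c)
    (haF : ∀ j, (∑ i, (a i j : ℕ)) ≤ c j)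
    (hutil : ∀ i x, v i x - dotP pstar x ≤ v i (a i) - dotP pstar (a i))
    (hsold : ∑ i, dotP pstar (a i) = ∑ j, (c j : ℝ) * pstar j) :
    (∀ p : Fin m → ℝ, (∀ j, 0 ≤ p j) → W v pstar ≤ W v p) ∧
    (∀ p : Fin m → ℝ, (∀ j, 0 ≤ p j) →
      ∀ b : ι → Bundle m c, (∀ j, (∑ i, (b i j : ℕ)) ≤ c j) →
        ∑ i, v i (b i) ≤ W v p) ∧
    W v pstar = ∑ i, v i (a i) := by
  have key : ∀ p : Fin m → ℝ, (∀ j, 0 ≤ p j) →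
      ∀ b : ι → Bundle m c, (∀ j, (∑ i, (b i j : ℕ)) ≤ c j) →
        ∑ i, v i (b i) ≤ W v p := by
    intro p hp b hb
    have h1 : ∑ i, dotP p (b i) ≤ ∑ j, (c j : ℝ) * p j := by
      simp only [dotP]
      rw [Finset.sum_comm]
      apply Finset.sum_le_sum
      intro j _
      have : ∑ i, p j * ((b i j : ℕ) : ℝ) = p j * ((∑ i, (b i j : ℕ) : ℕ) : ℝ) := by
        rw [← Finset.mul_sum]; push_cast; ring_nf
      rw [this, mul_comm]
      exact mul_le_mul_of_nonneg_right (by exact_mod_cast hb j) (hp j)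
    have h2 : ∑ i, (v i (b i) - dotP p (b i)) ≤
        ∑ i, Finset.univ.sup' Finset.univ_nonempty (fun x : Bundle m c => v i x - dotP p x) :=
      Finset.sum_le_sum fun i _ => Finset.le_sup' (fun x : Bundle m c => v i x - dotP p x) (Finset.mem_univ (b i))
    have := add_le_add h1 h2
    rw [Finset.sum_sub_distrib] at this
    unfold W
    linarith
  have heq : W v pstar = ∑ i, v i (a i) := by
    have hsup : ∀ i, Finset.univ.sup' Finset.univ_nonempty
        (fun x : Bundle m c => v i x - dotP pstar x) = v i (a i) - dotP pstar (a i) := by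
      intro i
      apply le_antisymm
      · exact Finset.sup'_le _ _ fun x _ => hutil i x
      · exact Finset.le_sup' (fun x : Bundle m c => v i x - dotP pstar x) (Finset.mem_univ (a i))
    unfold W
    simp only [hsup]
    rw [Finset.sum_sub_distrib, hsold]
    ring
  refine ⟨fun p hp => heq ▸ key p hp a haF, key, heq⟩
end

section
/- Consistency with demand responses forces linear-like bounds for bidder 2: in the capacity-10 example with v₂(x) = 9x + x²/25, any monotone valuation w with w(0) = 0 consistent with truthful demand responses at prices (94−ε)/10 (response x = 10) and (94+ε)/10 (response x = 0), for small ε > 0, satisfies w(x) ≤ x·(94+ε)/10 for all x ∈ {0,...,10} and w(10) ≥ 94 − ε. In particular the linear function x ↦ (94/10)·x is consistent with every truthful demand response of v₂ at every price. -/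
noncomputable section

/-- any monotone valuation w with w(0) = 0 consistent with
bidder 2's truthful demand responses at prices (94−ε)/10 (response 10) and
(94+ε)/10 (response 0) satisfies w(x) ≤ x·(94+ε)/10 for all x and
w(10) ≥ 94 − ε.  Moreover the linear function x ↦ (94/10)·x is consistent with
every truthful demand response of v₂ at every nonnegative price. -/
theorem stmt16 (ε : ℝ) (hε : 0 < ε) (hεs : ε < 94)
    (w : ℕ → ℝ) (hw0 : w 0 = 0)
    (hmono : ∀ x y : ℕ, x ≤ y → y ≤ 10 → w x ≤ w y)
    (h1 : ∀ y : ℕ, y ≤ 10 →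
      w y - (94 - ε) / 10 * y ≤ w 10 - (94 - ε) / 10 * 10)
    (h2 : ∀ y : ℕ, y ≤ 10 →
      w y - (94 + ε) / 10 * y ≤ w 0 - (94 + ε) / 10 * 0) :
    ((∀ x : ℕ, x ≤ 10 → w x ≤ (x : ℝ) * ((94 + ε) / 10)) ∧ 94 - ε ≤ w 10) ∧
    (∀ p : ℝ, 0 ≤ p → ∀ xs : ℕ, xs ≤ 10 →
      (∀ y : ℕ, y ≤ 10 → v2 y - p * y ≤ v2 xs - p * xs) →
      (∀ y : ℕ, y ≤ 10 → 94 / 10 * y - p * y ≤ 94 / 10 * xs - p * xs)) := by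
  constructor
  · constructor
    · intro x hx
      have := h2 x hx
      simp [hw0] at this
      linarith
    · have := h1 0 (by norm_num)
      simp [hw0] at this
      linarith
  · intro p hp xs hxs hopt y hy
    have hxsr : (xs : ℝ) ≤ 10 := by exact_mod_cast hxs
    have hyr : (y : ℝ) ≤ 10 := by exact_mod_cast hy
    have hxs0 : (0 : ℝ) ≤ (xs : ℝ) := Nat.cast_nonneg xs
    have hy0 : (0 : ℝ) ≤ (y : ℝ) := Nat.cast_nonneg y
    have hsq : (xs : ℝ) ^ 2 / 25 ≤ 10 * (xs : ℝ) / 25 := by nlinarith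
    have h10 := hopt 10 (le_refl 10)
    have h0 := hopt 0 (by norm_num)
    simp [v2] at h10 h0
    rcases le_or_gt p (94 / 10) with hc | hc
    · nlinarith [mul_nonneg (sub_nonneg.2 hc) hxs0]
    · nlinarith
end
end
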